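/- arXiv:1802.06652 — 5 statements merged into one kernel-verified Lean document; each statement's English description precedes it below -/
import Mathlib

section
/- For every real x ∈ (0,1] and ν ∈ (0.5, 1], the function g(x) = x^{-ν}(1 − (1+x)^{-ν}) satisfies g(x) ≤ ν((1−ν)/(2ν))^{1−ν} when ν ∈ (log₂ 1.5, 1], and g(x) ≤ 1 − 2^{-ν} when ν ∈ (0.5, log₂ 1.5]. -/
/-!
The derivative of `g = stepGap ν` has the sign of `1 + 2x - (1 + x) ^ (1 + ν)`. Take a
maximiser `z` of `g` on `[0, 1]` (for `ν < 1`, `g` is continuous there with `g 0 = 0`). At an interior maximum the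
critical equation `(1 + z) ^ (1 + ν) = 1 + 2z` turns `g z` into `z ^ (1 - ν) / (1 + 2z)`, and by
weighted AM-GM this is at most its value `ν ((1 - ν) / (2ν)) ^ (1 - ν)` at `z = (1 - ν) / (2ν)`.
A maximum at `z = 1` forces `g' 1 ≥ 0`, i.e. `2 ^ (1 + ν) ≤ 3`, i.e. `ν ≤ log₂ 1.5`. Conversely,
when `2 ^ (1 + ν) ≤ 3` strict convexity of `t ↦ t ^ (1 + ν)` rules out interior critical points,
so the maximum is `g 1 = 1 - 2 ^ (-ν)`.
-/

open Real Set Filter Topology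

theorem IsMaxOn.hasDerivAt_nonneg_of_right_endpoint {f : ℝ → ℝ} {a b f' : ℝ} (hab : a < b)
    (h : IsMaxOn f (Icc a b) b) (hf : HasDerivAt f f' b) : 0 ≤ f' := by
  have hcone : a - b ∈ posTangentConeAt (Icc a b) b :=
    sub_mem_posTangentConeAt_of_segment_subset (by rw [segment_symm, segment_eq_Icc hab.le])
  have := h.localize.hasFDerivWithinAt_nonpos hf.hasFDerivAt.hasFDerivWithinAt hcone
  rw [ContinuousLinearMap.toSpanSingleton_apply, smul_eq_mul] at this
  nlinarith

theorem one_add_rpow_lt_one_add_mul {p z : ℝ} (hp : 1 < p) (hz : z ∈ Ioo (0 : ℝ) 1) :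
    (1 + z) ^ p < 1 + (2 ^ p - 1) * z := by
  have key := (strictConvexOn_rpow hp).2 (mem_Ici.2 zero_le_one) (mem_Ici.2 zero_le_two)
    (by norm_num) (sub_pos.2 hz.2) hz.1 (sub_add_cancel 1 z)
  simp only [smul_eq_mul, one_rpow, mul_one] at key
  rw [show 1 - z + z * 2 = 1 + z by ring] at key
  linarith

theorem rpow_one_sub_div_le {ν z : ℝ} (hν0 : 0 < ν) (hν1 : ν < 1) (hz : 0 ≤ z) :
    z ^ (1 - ν) / (1 + 2 * z) ≤ ν * ((1 - ν) / (2 * ν)) ^ (1 - ν) := by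
  set x₀ := (1 - ν) / (2 * ν) with hx₀
  have hx₀pos : 0 < x₀ := by positivity
  have amgm := geom_mean_le_arith_mean2_weighted (sub_pos.2 hν1).le hν0.le hz hx₀pos.le
    (sub_add_cancel 1 ν)
  have hx₀ν : x₀ ^ ν * x₀ ^ (1 - ν) = x₀ := by
    rw [← rpow_add hx₀pos, add_sub_cancel, rpow_one]
  have hlin : (1 - ν) * z + ν * x₀ = ν * x₀ * (1 + 2 * z) := by
    rw [hx₀]; field_simp; ring
  rw [div_le_iff₀ (by positivity)]
  refine le_of_mul_le_mul_right ?_ (rpow_pos_of_pos hx₀pos ν)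
  calc z ^ (1 - ν) * x₀ ^ ν ≤ ν * x₀ * (1 + 2 * z) := hlin ▸ amgm
    _ = ν * x₀ ^ (1 - ν) * (1 + 2 * z) * x₀ ^ ν := by
        linear_combination (-(ν * (1 + 2 * z))) * hx₀ν

noncomputable def stepGap (ν x : ℝ) : ℝ := x ^ (-ν) * (1 - (1 + x) ^ (-ν))

theorem stepGap_zero {ν : ℝ} (hν : ν ≠ 0) : stepGap ν 0 = 0 := by
  simp [stepGap, zero_rpow (neg_ne_zero.2 hν)]

theorem stepGap_one (ν : ℝ) : stepGap ν 1 = 1 - 2 ^ (-ν) := by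
  norm_num [stepGap]

theorem stepGap_nonneg {ν x : ℝ} (hν : 0 ≤ ν) (hx : 0 ≤ x) : 0 ≤ stepGap ν x :=
  mul_nonneg (rpow_nonneg hx _)
    (sub_nonneg.2 (rpow_le_one_of_one_le_of_nonpos (by linarith) (neg_nonpos.2 hν)))

theorem stepGap_le_mul_rpow {ν x : ℝ} (hν0 : 0 < ν) (hν1 : ν ≤ 1) (hx : 0 ≤ x) :
    stepGap ν x ≤ ν * x ^ (1 - ν) := by
  rcases hx.eq_or_lt with rfl | hx
  · rw [stepGap_zero hν0.ne']; positivity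
  have hbern : (1 + x) ^ ν ≤ 1 + ν * x :=
    rpow_one_add_le_one_add_mul_self (by linarith) hν0.le hν1
  have hlow : 1 - ν * x ≤ (1 + x) ^ (-ν) := calc
    1 - ν * x ≤ (1 + ν * x)⁻¹ := by
      rw [inv_eq_one_div, le_div_iff₀ (by positivity)]
      nlinarith [sq_nonneg (ν * x)]
    _ ≤ ((1 + x) ^ ν)⁻¹ := inv_anti₀ (by positivity) hbern
    _ = (1 + x) ^ (-ν) := (rpow_neg (by linarith) ν).symm
  calc stepGap ν x ≤ x ^ (-ν) * (ν * x) :=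
        mul_le_mul_of_nonneg_left (by linarith) (rpow_nonneg hx.le _)
    _ = ν * x ^ (1 - ν) := by
        rw [mul_left_comm, ← rpow_add_one hx.ne', neg_add_eq_sub]

theorem continuousOn_stepGap {ν : ℝ} (hν0 : 0 < ν) (hν1 : ν < 1) :
    ContinuousOn (stepGap ν) (Icc 0 1) := by
  intro y hy
  rcases hy.1.eq_or_lt with rfl | hy0
  · have hlim : Tendsto (fun y : ℝ => ν * y ^ (1 - ν)) (𝓝[Icc 0 1] 0) (𝓝 0) := by
      have := ((continuous_rpow_const (sub_pos.2 hν1).le).tendsto 0).const_mul ν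
      rw [zero_rpow (sub_pos.2 hν1).ne', mul_zero] at this
      exact this.mono_left nhdsWithin_le_nhds
    rw [ContinuousWithinAt, stepGap_zero hν0.ne']
    refine squeeze_zero' ?_ ?_ hlim <;> filter_upwards [self_mem_nhdsWithin] with x hx
    · exact stepGap_nonneg hν0.le hx.1
    · exact stepGap_le_mul_rpow hν0 hν1.le hx.1
  · exact ((continuousAt_rpow_const _ _ (Or.inl hy0.ne')).mul (continuousAt_const.sub
      (ContinuousAt.rpow_const (f := fun t => 1 + t) (by fun_prop) (Or.inl (by linarith)))))
      |>.continuousWithinAt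

theorem hasDerivAt_stepGap (ν : ℝ) {x : ℝ} (hx : 0 < x) :
    HasDerivAt (stepGap ν)
      (ν * x ^ (-ν - 1) * (1 + x) ^ (-ν - 1) * (1 + 2 * x - (1 + x) ^ (1 + ν))) x := by
  have hx1 : 0 < 1 + x := by linarith
  have d1 := hasDerivAt_rpow_const (p := -ν) (Or.inl hx.ne')
  have d2 := (((hasDerivAt_id' x).const_add 1).rpow_const (p := -ν) (Or.inl hx1.ne')).const_sub 1
  refine (d1.mul d2).congr_deriv ?_
  have e1 : x ^ (-ν) = x ^ (-ν - 1) * x := by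
    rw [← rpow_add_one hx.ne', sub_add_cancel]
  have e2 : (1 + x) ^ (-ν) = (1 + x) ^ (-ν - 1) * (1 + x) := by
    rw [← rpow_add_one hx1.ne', sub_add_cancel]
  have e3 : (1 + x) ^ (1 + ν) * (1 + x) ^ (-ν - 1) = 1 := by
    rw [← rpow_add hx1, show 1 + ν + (-ν - 1) = 0 by ring, rpow_zero]
  rw [e1, e2]
  linear_combination (ν * x ^ (-ν - 1)) * e3

theorem stepGap_eq_of_critical {ν z : ℝ} (hz : 0 < z) (hcrit : (1 + z) ^ (1 + ν) = 1 + 2 * z) :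
    stepGap ν z = z ^ (1 - ν) / (1 + 2 * z) := by
  have hz1 : 0 < 1 + z := by linarith
  have e1 : z ^ (-ν) * z = z ^ (1 - ν) := by
    rw [← rpow_add_one hz.ne', neg_add_eq_sub]
  have e2 : (1 + z) ^ (-ν) * (1 + 2 * z) = 1 + z := by
    rw [← hcrit, ← rpow_add hz1, show -ν + (1 + ν) = 1 by ring, rpow_one]
  rw [stepGap, ← e1, eq_div_iff (by positivity)]
  linear_combination (-z ^ (-ν)) * e2

theorem stepGap_le_of_forall_critical {ν C x : ℝ} (hν0 : 0 < ν) (hν1 : ν < 1) (hC : 0 ≤ C)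
    (hend : 2 ^ (1 + ν) ≤ (3 : ℝ) → 1 - 2 ^ (-ν) ≤ C)
    (hcrit : ∀ z ∈ Ioo (0 : ℝ) 1, (1 + z) ^ (1 + ν) = 1 + 2 * z → z ^ (1 - ν) / (1 + 2 * z) ≤ C)
    (hx : x ∈ Icc (0 : ℝ) 1) : stepGap ν x ≤ C := by
  obtain ⟨z, hz, hmax⟩ := isCompact_Icc.exists_isMaxOn (nonempty_Icc.2 zero_le_one)
    (continuousOn_stepGap hν0 hν1)
  refine (hmax hx).trans ?_
  rcases hz.1.eq_or_lt with rfl | hz0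
  · rwa [stepGap_zero hν0.ne']
  have hderiv := hasDerivAt_stepGap ν hz0
  have hfactor : 0 < ν * z ^ (-ν - 1) * (1 + z) ^ (-ν - 1) := by positivity
  rcases hz.2.eq_or_lt with rfl | hz1
  · rw [stepGap_one]
    refine hend ?_
    have h := nonneg_of_mul_nonneg_right
      (hmax.hasDerivAt_nonneg_of_right_endpoint zero_lt_one hderiv) hfactor
    norm_num at h
    linarith
  · have hzero := (hmax.isLocalMax (Icc_mem_nhds hz0 hz1)).hasDerivAt_eq_zero hderiv
    have hcrit_eq : (1 + z) ^ (1 + ν) = 1 + 2 * z := by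
      rcases mul_eq_zero.1 hzero with h | h
      · exact absurd h hfactor.ne'
      · linarith
    rw [stepGap_eq_of_critical hz0 hcrit_eq]
    exact hcrit z ⟨hz0, hz1⟩ hcrit_eq

theorem stepGap_le_of_three_lt {ν x : ℝ} (hν1 : ν ≤ 1) (h3 : 3 < (2 : ℝ) ^ (1 + ν))
    (hx : x ∈ Ioc (0 : ℝ) 1) : stepGap ν x ≤ ν * ((1 - ν) / (2 * ν)) ^ (1 - ν) := by
  have hν0 : 0 < ν := by
    by_contra! h
    have : (2 : ℝ) ^ (1 + ν) ≤ 2 ^ (1 : ℝ) := rpow_le_rpow_of_exponent_le one_le_two (by linarith)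
    norm_num at this; linarith
  rcases hν1.eq_or_lt with rfl | hν1
  · -- at `ν = 1` the bound is `1 * 0 ^ 0 = 1`
    simpa using stepGap_le_mul_rpow hν0 le_rfl hx.1.le
  refine stepGap_le_of_forall_critical hν0 hν1 (by positivity) (fun h => absurd h h3.not_ge)
    (fun z hz _ => rpow_one_sub_div_le hν0 hν1 hz.1.le) (Ioc_subset_Icc_self hx)

theorem stepGap_le_of_le_three {ν x : ℝ} (hν0 : 0 < ν) (h3 : (2 : ℝ) ^ (1 + ν) ≤ 3)
    (hx : x ∈ Icc (0 : ℝ) 1) : stepGap ν x ≤ 1 - 2 ^ (-ν) := by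
  have hν1 : ν < 1 := by
    by_contra! h
    have : (2 : ℝ) ^ (2 : ℝ) ≤ 2 ^ (1 + ν) := rpow_le_rpow_of_exponent_le one_le_two (by linarith)
    norm_num at this; linarith
  refine stepGap_le_of_forall_critical hν0 hν1 ?_ (fun _ => le_rfl) (fun z hz hcrit => ?_) hx
  · rw [← stepGap_one]; exact stepGap_nonneg hν0.le zero_le_one
  · have := one_add_rpow_lt_one_add_mul (by linarith : 1 < 1 + ν) hz
    nlinarith [hz.1]

theorem stmt1_general (x ν : ℝ) (hx : x ∈ Set.Ioc (0 : ℝ) 1) :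
    (ν ∈ Set.Ioc (Real.logb 2 1.5) 1 →
      x ^ (-ν) * (1 - (1 + x) ^ (-ν)) ≤ ν * ((1 - ν) / (2 * ν)) ^ (1 - ν)) ∧
    (ν ∈ Set.Ioc (1/2 : ℝ) (Real.logb 2 1.5) →
      x ^ (-ν) * (1 - (1 + x) ^ (-ν)) ≤ 1 - 2 ^ (-ν)) := by
  have hpow : (2 : ℝ) ^ (1 + ν) = 2 * 2 ^ ν := by rw [rpow_add two_pos, rpow_one]
  constructor
  · rintro ⟨hlog, hν1⟩
    rw [logb_lt_iff_lt_rpow one_lt_two (by norm_num)] at hlog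
    exact stepGap_le_of_three_lt hν1 (by linarith) hx
  · rintro ⟨hν0, hlog⟩
    rw [le_logb_iff_rpow_le one_lt_two (by norm_num)] at hlog
    exact stepGap_le_of_le_three (by linarith) (by linarith) (Ioc_subset_Icc_self hx)

theorem stmt1 (x ν : ℝ) (hx : x ∈ Set.Ioc (0 : ℝ) 1) (hν : ν ∈ Set.Ioc (1/2 : ℝ) 1) :
    (ν ∈ Set.Ioc (Real.logb 2 1.5) 1 →
      x ^ (-ν) * (1 - (1 + x) ^ (-ν)) ≤ ν * ((1 - ν) / (2 * ν)) ^ (1 - ν)) ∧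
    (ν ∈ Set.Ioc (1/2 : ℝ) (Real.logb 2 1.5) →
      x ^ (-ν) * (1 - (1 + x) ^ (-ν)) ≤ 1 - 2 ^ (-ν)) :=
  stmt1_general x ν hx
end

section
/- Let p_S ∈ (0,1] and (γ_n)_{n≥1} be a positive sequence with ∑ γ_n = ∞ and ∑ γ_n² < ∞. Define γ̄_n = ∑_{ℓ=1}^{n} γ_ℓ p_S^ℓ (1−p_S)^{n−ℓ} C(n−1, ℓ−1) and γ̊_n² = ∑_{ℓ=1}^{n} γ_ℓ² p_S^ℓ (1−p_S)^{n−ℓ} C(n−1, ℓ−1). Then ∑_{n=1}^{∞} γ̄_n = ∞, ∑_{n=1}^{∞} γ̊_n² = ∑_{n=1}^{∞} γ_n² < ∞, and ∑_{n=1}^{∞} γ̄_n² ≤ ∑_{n=1}^{∞} γ̊_n². -/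
private lemma icc_reindex (n : ℕ) (f : ℕ → ℝ) :
    ∑ ℓ ∈ Finset.Icc 1 (n + 1), f ℓ = ∑ k ∈ Finset.range (n + 1), f (k + 1) := by
  rw [← Finset.Ico_add_one_right_eq_Icc, Finset.sum_Ico_eq_sum_range]
  simp [add_comm]

private lemma row_sum (pS : ℝ) (n : ℕ) :
    ∑ ℓ ∈ Finset.Icc 1 (n + 1),
      pS ^ ℓ * (1 - pS) ^ (n + 1 - ℓ) * ((n.choose (ℓ - 1)) : ℝ) = pS := by
  rw [icc_reindex]
  have h1 : ∀ k ∈ Finset.range (n + 1),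
      pS ^ (k + 1) * (1 - pS) ^ (n + 1 - (k + 1)) * ((n.choose (k + 1 - 1)) : ℝ)
      = pS * (pS ^ k * (1 - pS) ^ (n - k) * (n.choose k : ℝ)) := by
    intro k hk
    have : n + 1 - (k + 1) = n - k := by omega
    rw [this, Nat.add_sub_cancel]
    ring
  rw [Finset.sum_congr rfl h1, ← Finset.mul_sum, ← add_pow]
  norm_num

/-- Key lemma: summability and tsum of row sums of the negative-binomial kernel. -/
private lemma kernel_main (pS : ℝ) (h0 : 0 < pS) (h1 : pS ≤ 1) (c : ℕ → ℝ)
    (hc : ∀ k, 0 ≤ c k) :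
    (Summable (fun n : ℕ => ∑ k ∈ Finset.range (n + 1),
        c k * (pS ^ (k + 1) * (1 - pS) ^ (n - k) * (n.choose k : ℝ))) ↔ Summable c) ∧
    (Summable c → ∑' n : ℕ, ∑ k ∈ Finset.range (n + 1),
        c k * (pS ^ (k + 1) * (1 - pS) ^ (n - k) * (n.choose k : ℝ)) = ∑' k, c k) := by
  have hx0 : 0 ≤ 1 - pS := by linarith
  have hx1 : ‖(1 - pS)‖ < 1 := by rw [Real.norm_eq_abs, abs_of_nonneg hx0]; linarith
  set w : ℕ → ℕ → ℝ := fun n k => pS ^ (k + 1) * (1 - pS) ^ (n - k) * (n.choose k : ℝ) with hw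
  have hw0 : ∀ n k, 0 ≤ w n k := fun n k => by
    have := Nat.cast_nonneg (α := ℝ) (n.choose k)
    positivity
  set F : ℕ × ℕ → ℝ := fun p => if p.2 ≤ p.1 then c p.2 * w p.1 p.2 else 0 with hF
  have hF0 : 0 ≤ F := by
    intro p
    by_cases h : p.2 ≤ p.1 <;> simp [F, h]
    exact mul_nonneg (hc _) (hw0 _ _)
  have hrow_summable : ∀ n, Summable (fun k => F (n, k)) := by
    intro n
    apply summable_of_ne_finset_zero (s := Finset.range (n + 1))
    intro k hk
    simp only [Finset.mem_range] at hk
    simp only [F, if_neg (by omega : ¬ k ≤ n)]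
  have hrow_eq : ∀ n, ∑' k, F (n, k) = ∑ k ∈ Finset.range (n + 1), c k * w n k := by
    intro n
    rw [tsum_eq_sum (s := Finset.range (n + 1)) (fun k hk => by
      simp only [Finset.mem_range] at hk
      simp only [F, if_neg (by omega : ¬ k ≤ n)])]
    refine Finset.sum_congr rfl fun k hk => ?_
    simp only [Finset.mem_range] at hk
    simp [F, if_pos (by omega : k ≤ n)]
  have hcol : ∀ k, HasSum (fun n => F (n, k)) (c k) := by
    intro k
    have base : HasSum (fun m : ℕ => ((m + k).choose k : ℝ) * (1 - pS) ^ m)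
        (1 / (1 - (1 - pS)) ^ (k + 1)) := hasSum_choose_mul_geometric_of_norm_lt_one k hx1
    have h2 : HasSum (fun m : ℕ => F (m + k, k)) (c k) := by
      have h3 := base.mul_left (c k * pS ^ (k + 1))
      have heq : (fun m : ℕ => c k * pS ^ (k + 1) * (((m + k).choose k : ℝ) * (1 - pS) ^ m))
          = fun m : ℕ => F (m + k, k) := by
        funext m
        simp only [F, if_pos (by omega : k ≤ m + k), hw]
        have : m + k - k = m := by omega
        rw [this]
        ring
      have hval : c k * pS ^ (k + 1) * (1 / (1 - (1 - pS)) ^ (k + 1)) = c k := by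
        have : (1 : ℝ) - (1 - pS) = pS := by ring
        rw [this]
        field_simp
      rw [heq, hval] at h3
      exact h3
    have h4 := (hasSum_nat_add_iff (f := fun n => F (n, k)) k).mp h2
    have h5 : ∑ i ∈ Finset.range k, F (i, k) = 0 := by
      apply Finset.sum_eq_zero
      intro i hi
      simp only [Finset.mem_range] at hi
      simp [F, if_neg (by omega : ¬ k ≤ i)]
    rw [h5, add_zero] at h4
    exact h4
  set G : ℕ × ℕ → ℝ := fun q => F (q.2, q.1) with hG
  have hG0 : 0 ≤ G := fun q => hF0 (q.2, q.1)
  have hswap : G = F ∘ (Equiv.prodComm ℕ ℕ) := rfl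
  constructor
  · constructor
    · intro h
      have hFsum : Summable F := by
        refine (summable_prod_of_nonneg hF0).mpr ⟨hrow_summable, ?_⟩
        apply h.congr
        intro n
        exact (hrow_eq n).symm
      have hH : Summable (fun q : ℕ × ℕ => G q) := by
        rw [hswap]
        exact ((Equiv.prodComm ℕ ℕ).summable_iff).mpr hFsum
      have := ((summable_prod_of_nonneg (f := G) hG0).mp hH).2
      apply this.congr
      intro k
      exact (hcol k).tsum_eq
    · intro h
      have hH : Summable (fun q : ℕ × ℕ => G q) := by
        refine (summable_prod_of_nonneg (f := G) hG0).mpr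
          ⟨fun k => (hcol k).summable, ?_⟩
        apply h.congr
        intro k
        exact ((hcol k).tsum_eq).symm
      have hFsum : Summable F := by
        rw [hswap] at hH
        exact ((Equiv.prodComm ℕ ℕ).summable_iff).mp hH
      have := ((summable_prod_of_nonneg hF0).mp hFsum).2
      apply this.congr
      intro n
      exact hrow_eq n
  · intro h
    have hH : Summable (fun q : ℕ × ℕ => G q) := by
      refine (summable_prod_of_nonneg (f := G) hG0).mpr
        ⟨fun k => (hcol k).summable, ?_⟩
      apply h.congr
      intro k
      exact ((hcol k).tsum_eq).symm
    have hFsum : Summable F := by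
      rw [hswap] at hH
      exact ((Equiv.prodComm ℕ ℕ).summable_iff).mp hH
    have t1 : ∑' p : ℕ × ℕ, F p = ∑' n, ∑' k, F (n, k) := Summable.tsum_prod' hFsum hrow_summable
    have t2 : ∑' q : ℕ × ℕ, G q = ∑' k, ∑' n, F (n, k) :=
      Summable.tsum_prod' hH (fun k => (hcol k).summable)
    have t3 : ∑' q : ℕ × ℕ, G q = ∑' p : ℕ × ℕ, F p := by
      rw [hswap]
      exact (Equiv.prodComm ℕ ℕ).tsum_eq F
    calc ∑' n : ℕ, ∑ k ∈ Finset.range (n + 1), c k * w n k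
        = ∑' n, ∑' k, F (n, k) := by
          exact tsum_congr fun n => (hrow_eq n).symm
      _ = ∑' k, ∑' n, F (n, k) := by rw [← t1, ← t3, t2]
      _ = ∑' k, c k := tsum_congr fun k => (hcol k).tsum_eq

theorem stmt7 (pS : ℝ) (hp : pS ∈ Set.Ioc (0 : ℝ) 1) (γ : ℕ → ℝ)
    (hpos : ∀ n : ℕ, 1 ≤ n → 0 < γ n)
    (hdiv : ¬ Summable (fun n : ℕ => γ (n + 1)))
    (hsq : Summable (fun n : ℕ => (γ (n + 1)) ^ 2))
    (gbar gringsq : ℕ → ℝ)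
    (hgbar : ∀ n : ℕ, 1 ≤ n → gbar n =
      ∑ ℓ ∈ Finset.Icc 1 n, γ ℓ * pS ^ ℓ * (1 - pS) ^ (n - ℓ) * ((n - 1).choose (ℓ - 1) : ℝ))
    (hgring : ∀ n : ℕ, 1 ≤ n → gringsq n =
      ∑ ℓ ∈ Finset.Icc 1 n, (γ ℓ) ^ 2 * pS ^ ℓ * (1 - pS) ^ (n - ℓ) * ((n - 1).choose (ℓ - 1) : ℝ)) :
    ¬ Summable (fun n : ℕ => gbar (n + 1)) ∧
    Summable (fun n : ℕ => gringsq (n + 1)) ∧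
    ∑' n : ℕ, gringsq (n + 1) = ∑' n : ℕ, (γ (n + 1)) ^ 2 ∧
    ∑' n : ℕ, (gbar (n + 1)) ^ 2 ≤ ∑' n : ℕ, gringsq (n + 1) := by
  obtain ⟨h0, h1⟩ := hp
  have hx0 : 0 ≤ 1 - pS := by linarith
  -- rewrite gbar and gringsq in range form
  have hgbar' : ∀ n : ℕ, gbar (n + 1) = ∑ k ∈ Finset.range (n + 1),
      γ (k + 1) * (pS ^ (k + 1) * (1 - pS) ^ (n - k) * (n.choose k : ℝ)) := by
    intro n
    rw [hgbar (n + 1) (by omega), icc_reindex]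
    refine Finset.sum_congr rfl fun k hk => ?_
    have e1 : n + 1 - (k + 1) = n - k := by omega
    have e2 : n + 1 - 1 = n := by omega
    have e3 : k + 1 - 1 = k := by omega
    rw [e1, e2, e3]; ring
  have hgring' : ∀ n : ℕ, gringsq (n + 1) = ∑ k ∈ Finset.range (n + 1),
      (γ (k + 1)) ^ 2 * (pS ^ (k + 1) * (1 - pS) ^ (n - k) * (n.choose k : ℝ)) := by
    intro n
    rw [hgring (n + 1) (by omega), icc_reindex]
    refine Finset.sum_congr rfl fun k hk => ?_
    have e1 : n + 1 - (k + 1) = n - k := by omega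
    have e2 : n + 1 - 1 = n := by omega
    have e3 : k + 1 - 1 = k := by omega
    rw [e1, e2, e3]; ring
  have hmainsq := kernel_main pS h0 h1 (fun k => (γ (k + 1)) ^ 2) (fun k => sq_nonneg _)
  have hmain := kernel_main pS h0 h1 (fun k => γ (k + 1)) (fun k => (hpos (k + 1) (by omega)).le)
  have hsum_gring : Summable (fun n : ℕ => gringsq (n + 1)) := by
    have := (hmainsq.1).mpr hsq
    apply this.congr
    intro n
    exact (hgring' n).symm
  have htsum_gring : ∑' n : ℕ, gringsq (n + 1) = ∑' n : ℕ, (γ (n + 1)) ^ 2 := by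
    rw [tsum_congr hgring']
    exact hmainsq.2 hsq
  refine ⟨?_, hsum_gring, htsum_gring, ?_⟩
  · intro hcon
    apply hdiv
    apply (hmain.1).mp
    apply hcon.congr
    intro n
    exact hgbar' n
  · -- Cauchy-Schwarz pointwise
    have hgring_nonneg : ∀ n, 0 ≤ gringsq (n + 1) := by
      intro n
      rw [hgring' n]
      apply Finset.sum_nonneg
      intro k hk
      have := Nat.cast_nonneg (α := ℝ) (n.choose k)
      positivity
    have hpt : ∀ n : ℕ, (gbar (n + 1)) ^ 2 ≤ gringsq (n + 1) := by
      intro n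
      set K : ℕ → ℝ := fun ℓ => pS ^ ℓ * (1 - pS) ^ (n + 1 - ℓ) * ((n.choose (ℓ - 1)) : ℝ)
        with hKdef
      have hK0 : ∀ ℓ, 0 ≤ K ℓ := fun ℓ => by
        have := Nat.cast_nonneg (α := ℝ) (n.choose (ℓ - 1))
        positivity
      have hb : gbar (n + 1) = ∑ ℓ ∈ Finset.Icc 1 (n + 1), γ ℓ * K ℓ := by
        rw [hgbar (n + 1) (by omega)]
        refine Finset.sum_congr rfl fun ℓ hℓ => ?_
        simp only [K, Nat.add_sub_cancel]
        ring
      have hr : gringsq (n + 1) = ∑ ℓ ∈ Finset.Icc 1 (n + 1), (γ ℓ) ^ 2 * K ℓ := by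
        rw [hgring (n + 1) (by omega)]
        refine Finset.sum_congr rfl fun ℓ hℓ => ?_
        simp only [K, Nat.add_sub_cancel]
        ring
      have hcs := Finset.sum_mul_sq_le_sq_mul_sq (Finset.Icc 1 (n + 1))
        (fun ℓ => γ ℓ * Real.sqrt (K ℓ)) (fun ℓ => Real.sqrt (K ℓ))
      have e1 : ∀ ℓ ∈ Finset.Icc 1 (n + 1),
          (γ ℓ * Real.sqrt (K ℓ)) * Real.sqrt (K ℓ) = γ ℓ * K ℓ := by
        intro ℓ _
        rw [mul_assoc, Real.mul_self_sqrt (hK0 ℓ)]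
      have e2 : ∀ ℓ ∈ Finset.Icc 1 (n + 1),
          (γ ℓ * Real.sqrt (K ℓ)) ^ 2 = (γ ℓ) ^ 2 * K ℓ := by
        intro ℓ _
        rw [mul_pow, Real.sq_sqrt (hK0 ℓ)]
      have e3 : ∀ ℓ ∈ Finset.Icc 1 (n + 1), (Real.sqrt (K ℓ)) ^ 2 = K ℓ := by
        intro ℓ _
        exact Real.sq_sqrt (hK0 ℓ)
      rw [Finset.sum_congr rfl e1, Finset.sum_congr rfl e2, Finset.sum_congr rfl e3] at hcs
      have hKsum : ∑ ℓ ∈ Finset.Icc 1 (n + 1), K ℓ = pS := row_sum pS n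
      rw [hKsum, ← hb, ← hr] at hcs
      calc (gbar (n + 1)) ^ 2 ≤ gringsq (n + 1) * pS := hcs
        _ ≤ gringsq (n + 1) := by
            nlinarith [hgring_nonneg n]
    have hsum_sq : Summable (fun n : ℕ => (gbar (n + 1)) ^ 2) :=
      Summable.of_nonneg_of_le (fun n => sq_nonneg _) hpt hsum_gring
    exact Summable.tsum_le_tsum hpt hsum_sq hsum_gring
end

section
/- Let W_n be a Binomial(n, p) random variable with p ∈ (0,1), ξ ∈ (0,1), and let (γ_ℓ)_{ℓ≥1} be a positive nonincreasing sequence. Then E[γ_{W_n+1}²] ≤ exp(−½ ξ² p n) γ_1² + γ_{⌊(1−ξ)pn⌋+2}². -/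
/-!
Split the expectation at `m = ⌊(1 - ξ) p n⌋`. On `{W ≤ m}` bound `γ_{W+1}` by `γ_1` and the
probability by the lower-tail Chernoff bound; on `{W > m}` bound `γ_{W+1}` by `γ_{m+2}` and the
probability by `1`. The Chernoff bound comes from Markov's inequality for `q ^ W` with
`q = 1 - ξ`, the moment generating function `E[q ^ W] = (1 - p ξ) ^ n ≤ exp (-p ξ n)`, and the
estimate `q log q ≥ (q² - 1) / 2 = -ξ + ξ² / 2`.
-/

open Finset Real

noncomputable def binomWeight (n : ℕ) (p : ℝ) (k : ℕ) : ℝ :=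
  n.choose k * p ^ k * (1 - p) ^ (n - k)

lemma binomWeight_nonneg {p : ℝ} (hp0 : 0 ≤ p) (hp1 : p ≤ 1) (n k : ℕ) :
    0 ≤ binomWeight n p k := by
  unfold binomWeight
  have : 0 ≤ 1 - p := by linarith
  positivity

lemma sum_binomWeight_mul_pow (n : ℕ) (p x : ℝ) :
    ∑ k ∈ range (n + 1), binomWeight n p k * x ^ k = (p * x + (1 - p)) ^ n := by
  rw [add_pow]
  refine sum_congr rfl fun k _ => ?_
  unfold binomWeight
  ring

lemma sum_binomWeight (n : ℕ) (p : ℝ) : ∑ k ∈ range (n + 1), binomWeight n p k = 1 := by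
  simpa using sum_binomWeight_mul_pow n p 1

lemma sq_sub_one_div_two_le_mul_log {x : ℝ} (hx0 : 0 < x) (hx1 : x ≤ 1) :
    (x ^ 2 - 1) / 2 ≤ x * log x := by
  have h : (x - x⁻¹) / 2 ≤ log x := by
    rw [← sinh_log hx0]
    exact sinh_le_self_iff.2 (log_nonpos hx0.le hx1)
  calc (x ^ 2 - 1) / 2 = x * ((x - x⁻¹) / 2) := by field_simp
    _ ≤ x * log x := mul_le_mul_of_nonneg_left h hx0.le

lemma sum_binomWeight_le_exp {p ξ : ℝ} (hp0 : 0 ≤ p) (hp1 : p ≤ 1) (hξ0 : 0 ≤ ξ) (hξ1 : ξ < 1)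
    (n : ℕ) :
    ∑ k ∈ range (n + 1) with k ≤ ⌊(1 - ξ) * p * n⌋₊, binomWeight n p k ≤
      exp (-(1 / 2) * ξ ^ 2 * p * n) := by
  set q := 1 - ξ with hq
  have hq0 : 0 < q := by linarith
  have hq1 : q ≤ 1 := by linarith
  have hw := binomWeight_nonneg hp0 hp1 n
  have hmarkov : ∀ k : ℕ, k ≤ ⌊q * p * n⌋₊ →
      binomWeight n p k ≤ binomWeight n p k * q ^ k / q ^ (q * p * n) := by
    intro k hk
    rw [mul_div_assoc, ← rpow_natCast]
    refine le_mul_of_one_le_right (hw k) ?_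
    rw [one_le_div (rpow_pos_of_pos hq0 _)]
    refine rpow_le_rpow_of_exponent_ge hq0 hq1 ((Nat.cast_le.2 hk).trans (Nat.floor_le ?_))
    positivity
  have hmgf : (p * q + (1 - p)) ^ n ≤ exp (-(p * ξ * n)) := by
    calc (p * q + (1 - p)) ^ n ≤ exp (-(p * ξ)) ^ n := by
          gcongr
          linarith [add_one_le_exp (-(p * ξ))]
      _ = exp (-(p * ξ * n)) := by rw [← exp_nat_mul]; ring_nf
  have hlog : exp (p * n * (q ^ 2 - 1) / 2) ≤ q ^ (q * p * n) := by
    rw [rpow_def_of_pos hq0, exp_le_exp]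
    have := mul_le_mul_of_nonneg_left (sq_sub_one_div_two_le_mul_log hq0 hq1)
      (mul_nonneg hp0 n.cast_nonneg)
    linarith
  calc ∑ k ∈ range (n + 1) with k ≤ ⌊q * p * n⌋₊, binomWeight n p k
      ≤ ∑ k ∈ range (n + 1) with k ≤ ⌊q * p * n⌋₊,
          binomWeight n p k * q ^ k / q ^ (q * p * n) :=
        sum_le_sum fun k hk => hmarkov k (mem_filter.1 hk).2
    _ ≤ ∑ k ∈ range (n + 1), binomWeight n p k * q ^ k / q ^ (q * p * n) :=
        sum_le_sum_of_subset_of_nonneg (filter_subset _ _) fun k _ _ => by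
          have := hw k; positivity
    _ = (p * q + (1 - p)) ^ n / q ^ (q * p * n) := by rw [← sum_div, sum_binomWeight_mul_pow]
    _ ≤ exp (-(p * ξ * n)) / exp (p * n * (q ^ 2 - 1) / 2) := by gcongr
    _ = exp (-(1 / 2) * ξ ^ 2 * p * n) := by rw [← exp_sub, hq]; ring_nf

lemma sum_mul_le_of_le_of_not_le {ι : Type*} {s : Finset ι} {w f : ι → ℝ} {P : ι → Prop}
    [DecidablePred P] {A B : ℝ} (hw : ∀ i ∈ s, 0 ≤ w i) (hw1 : ∑ i ∈ s, w i ≤ 1) (hB : 0 ≤ B)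
    (hfA : ∀ i ∈ s, P i → f i ≤ A) (hfB : ∀ i ∈ s, ¬ P i → f i ≤ B) :
    ∑ i ∈ s, w i * f i ≤ A * ∑ i ∈ s with P i, w i + B := by
  rw [← sum_filter_add_sum_filter_not s P, mul_sum]
  gcongr ?_ + ?_
  · refine sum_le_sum fun i hi => ?_
    rw [mem_filter] at hi
    rw [mul_comm A]
    exact mul_le_mul_of_nonneg_left (hfA i hi.1 hi.2) (hw i hi.1)
  · calc ∑ i ∈ s with ¬ P i, w i * f i ≤ ∑ i ∈ s with ¬ P i, w i * B := by
          refine sum_le_sum fun i hi => ?_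
          rw [mem_filter] at hi
          exact mul_le_mul_of_nonneg_left (hfB i hi.1 hi.2) (hw i hi.1)
      _ ≤ ∑ i ∈ s, w i * B :=
          sum_le_sum_of_subset_of_nonneg (filter_subset _ _) fun i hi _ => mul_nonneg (hw i hi) hB
      _ ≤ B := by rw [← sum_mul]; exact mul_le_of_le_one_left hB hw1

theorem stmt11 (p ξ : ℝ) (hp : p ∈ Set.Ioo (0 : ℝ) 1) (hξ : ξ ∈ Set.Ioo (0 : ℝ) 1)
    (n : ℕ) (γ : ℕ → ℝ)
    (hpos : ∀ ℓ : ℕ, 1 ≤ ℓ → 0 < γ ℓ)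
    (hmono : ∀ ℓ : ℕ, 1 ≤ ℓ → γ (ℓ + 1) ≤ γ ℓ) :
    ∑ k ∈ Finset.range (n + 1),
        (n.choose k : ℝ) * p ^ k * (1 - p) ^ (n - k) * (γ (k + 1)) ^ 2 ≤
      Real.exp (-(1/2) * ξ ^ 2 * p * n) * (γ 1) ^ 2 +
        (γ (⌊(1 - ξ) * p * n⌋₊ + 2)) ^ 2 := by
  obtain ⟨hp0, hp1⟩ := hp
  obtain ⟨hξ0, hξ1⟩ := hξ
  set m := ⌊(1 - ξ) * p * n⌋₊
  have hγ : AntitoneOn γ (Set.Ici 1) := antitoneOn_nat_Ici_of_succ_le hmono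
  have hγ_sq : ∀ a k : ℕ, 1 ≤ a → a ≤ k + 1 → γ (k + 1) ^ 2 ≤ γ a ^ 2 := fun a k ha hak =>
    pow_le_pow_left₀ (hpos _ (by omega)).le (hγ ha (Set.mem_Ici.2 (by omega)) hak) 2
  calc ∑ k ∈ range (n + 1), (n.choose k : ℝ) * p ^ k * (1 - p) ^ (n - k) * γ (k + 1) ^ 2
      = ∑ k ∈ range (n + 1), binomWeight n p k * γ (k + 1) ^ 2 := rfl
    _ ≤ γ 1 ^ 2 * ∑ k ∈ range (n + 1) with k ≤ m, binomWeight n p k + γ (m + 2) ^ 2 :=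
        sum_mul_le_of_le_of_not_le (fun k _ => binomWeight_nonneg hp0.le hp1.le n k)
          (sum_binomWeight n p).le (sq_nonneg _)
          (fun k _ _ => hγ_sq 1 k le_rfl (by omega))
          (fun k _ hk => hγ_sq (m + 2) k (by omega) (by omega))
    _ ≤ exp (-(1 / 2) * ξ ^ 2 * p * n) * γ 1 ^ 2 + γ (m + 2) ^ 2 := by
        rw [mul_comm]
        gcongr
        exact sum_binomWeight_le_exp hp0.le hp1.le hξ0.le hξ1 n
end

section
/- Let M ≥ 1 and define h on the set 𝒳 = {X ∈ ℍ₊^M : tr(X) ≤ 1} of positive semidefinite Hermitian M×M matrices of trace at most 1 by h(X) = tr(X log X) + (1 − tr X) log(1 − tr X) (with the conventions 0 log 0 = 0). Then its convex conjugate over 𝒳, h*(Y) = max_{X ∈ 𝒳} [tr(YX) − h(X)], equals log(1 + tr(exp Y)) for every Hermitian matrix Y, and the maximizer is G(Y) = exp(Y)/(1 + tr(exp Y)). -/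
/-!
Diagonalise `X = U diag(p) U*` and `Y = V diag(a) V*`. Then `tr(YX) = ∑ᵢ pᵢ ∑ⱼ Sᵢⱼ aⱼ`, where
`Sᵢⱼ = |(U* V)ᵢⱼ|²` is doubly stochastic. Convexity of `exp` bounds `∑ⱼ Sᵢⱼ aⱼ` by `log bᵢ` with
`b = S e^a`, and `∑ᵢ bᵢ = tr e^Y`. Gibbs' inequality for the probability vector `(p, 1 - ∑ p)`
against the weights `(b, 1)` then gives `tr(YX) - h(X) ≤ log (1 + tr e^Y)`. The maximiser
`e^Y / (1 + tr e^Y)` is a function of `Y`, so at it everything reduces to a computation with the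
eigenvalues of `Y`.
-/

open scoped Matrix ComplexOrder

/-- Modified von Neumann entropy `h(X) = tr(X log X) + (1 - tr X) log (1 - tr X)`,
defined via the eigenvalues of a Hermitian matrix (junk value `0` otherwise),
with the convention `0 log 0 = 0` (which `Real.log 0 = 0` provides). -/
noncomputable def vnEntropy {M : ℕ} (X : Matrix (Fin M) (Fin M) ℂ) : ℝ :=
  if h : X.IsHermitian then
    (∑ i, h.eigenvalues i * Real.log (h.eigenvalues i)) +
      (1 - X.trace.re) * Real.log (1 - X.trace.re)
  else 0

open Real Finset Matrix

lemma mul_log_sub_mul_log_le {q c : ℝ} (hq : 0 ≤ q) (hc : 0 < c) :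
    q * log c - q * log q ≤ c - q := by
  rcases hq.eq_or_lt with rfl | hq
  · simpa using hc.le
  have h := mul_le_mul_of_nonneg_left (log_le_sub_one_of_pos (div_pos hc hq)) hq.le
  rw [log_div hc.ne' hq.ne', mul_sub, mul_sub, mul_div_cancel₀ _ hq.ne'] at h
  linarith

lemma sum_mul_log_sub_sum_mul_log_le_log_sum {ι : Type*} (s : Finset ι) {q b : ι → ℝ}
    (hq : ∀ i ∈ s, 0 ≤ q i) (hq1 : ∑ i ∈ s, q i = 1) (hb : ∀ i ∈ s, 0 < b i) :
    ∑ i ∈ s, q i * log (b i) - ∑ i ∈ s, q i * log (q i) ≤ log (∑ i ∈ s, b i) := by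
  set B := ∑ i ∈ s, b i
  have hB : 0 < B := by
    obtain ⟨i, hi⟩ : s.Nonempty := nonempty_of_sum_ne_zero (by rw [hq1]; exact one_ne_zero)
    exact sum_pos hb ⟨i, hi⟩
  have termwise : ∑ i ∈ s, (q i * log (b i) - q i * log (q i))
      ≤ ∑ i ∈ s, (b i / B - q i + q i * log B) := by
    refine sum_le_sum fun i hi => ?_
    have := mul_log_sub_mul_log_le (hq i hi) (div_pos (hb i hi) hB)
    rw [log_div (hb i hi).ne' hB.ne'] at this
    linarith
  rw [sum_sub_distrib, sum_add_distrib, sum_sub_distrib, ← sum_div, ← sum_mul, hq1,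
    div_self hB.ne'] at termwise
  linarith

section ScalarProblem

variable {ι : Type*} [Fintype ι]

/-- `h (diagonal p)`. -/
noncomputable def modEntropy (p : ι → ℝ) : ℝ :=
  ∑ i, p i * log (p i) + (1 - ∑ i, p i) * log (1 - ∑ i, p i)

/-- The eigenvalues of the maximiser `e^Y / (1 + tr e^Y)` are `softmax a (aᵢ)`, `a` those of `Y`. -/
noncomputable def softmax (a : ι → ℝ) (x : ℝ) : ℝ :=
  (1 + ∑ j, exp (a j))⁻¹ * exp x

lemma softmax_nonneg (a : ι → ℝ) (x : ℝ) : 0 ≤ softmax a x := by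
  unfold softmax
  positivity

lemma sum_softmax (a : ι → ℝ) :
    ∑ i, softmax a (a i) = 1 - (1 + ∑ j, exp (a j))⁻¹ := by
  have hZ : 0 < 1 + ∑ j, exp (a j) := by positivity
  simp only [softmax]
  rw [← mul_sum]
  field_simp
  ring

lemma sum_mul_sum_sub_modEntropy_le [DecidableEq ι] {S : Matrix ι ι ℝ}
    (hS : S ∈ doublyStochastic ℝ ι) (a : ι → ℝ) {p : ι → ℝ}
    (hp : ∀ i, 0 ≤ p i) (hp1 : ∑ i, p i ≤ 1) :
    ∑ i, p i * ∑ j, S i j * a j - modEntropy p ≤ log (1 + ∑ j, exp (a j)) := by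
  set b : ι → ℝ := fun i => ∑ j, S i j * exp (a j)
  have jensen (i : ι) : exp (∑ j, S i j * a j) ≤ b i := by
    simpa using convexOn_exp.map_sum_le (fun j _ => nonneg_of_mem_doublyStochastic hS)
      (sum_row_of_mem_doublyStochastic hS i) (fun j _ => Set.mem_univ (a j))
  have hb (i : ι) : 0 < b i := (exp_pos _).trans_le (jensen i)
  have hpb : ∑ i, p i * ∑ j, S i j * a j ≤ ∑ i, p i * log (b i) :=
    sum_le_sum fun i _ =>
      mul_le_mul_of_nonneg_left ((le_log_iff_exp_le (hb i)).2 (jensen i)) (hp i)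
  have hsumb : ∑ i, b i = ∑ j, exp (a j) := by
    simp only [b]
    rw [sum_comm]
    simp_rw [← sum_mul, sum_col_of_mem_doublyStochastic hS, one_mul]
  -- the missing mass `1 - ∑ p` sits at `none`, with weight `1`
  have gibbs := sum_mul_log_sub_sum_mul_log_le_log_sum (univ : Finset (Option ι))
    (q := fun o => o.elim (1 - ∑ i, p i) p) (b := fun o => o.elim 1 b)
    (by rintro (_ | i) _ <;> simp [hp, hp1]) (by simp [Fintype.sum_option])
    (by rintro (_ | i) _ <;> simp [hb])
  simp only [Fintype.sum_option, Option.elim, log_one, mul_zero, zero_add, hsumb] at gibbs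
  unfold modEntropy
  linarith

lemma sum_softmax_mul_sub_modEntropy (a : ι → ℝ) :
    ∑ i, softmax a (a i) * a i - modEntropy (fun i => softmax a (a i)) =
      log (1 + ∑ j, exp (a j)) := by
  have hsum := sum_softmax a
  set Z := 1 + ∑ j, exp (a j)
  have hZ : 0 < Z := by positivity
  have hlog (i : ι) : log (softmax a (a i)) = a i - log Z := by
    rw [softmax, log_mul (inv_ne_zero hZ.ne') (exp_ne_zero _), log_inv, log_exp]
    ring
  simp only [modEntropy, hlog, hsum, sub_sub_cancel, log_inv, mul_sub, sum_sub_distrib,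
    ← sum_mul]
  ring

end ScalarProblem

namespace Matrix

variable {n : Type*} [Fintype n] [DecidableEq n]

lemma normSq_mem_doublyStochastic {W : Matrix n n ℂ} (hW : W ∈ unitaryGroup n ℂ) :
    of (fun i j => Complex.normSq (W i j)) ∈ doublyStochastic ℝ n := by
  have row (V : Matrix n n ℂ) (hV : V * star V = 1) (i : n) :
      ∑ j, Complex.normSq (V i j) = 1 := by
    have := congrFun (congrFun hV i) i
    simp only [mul_apply, star_apply, one_apply_eq, RCLike.star_def, Complex.mul_conj] at this
    exact_mod_cast this
  refine mem_doublyStochastic_iff_sum.2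
    ⟨fun i j => Complex.normSq_nonneg _, row W (mem_unitaryGroup_iff.1 hW), fun j => ?_⟩
  simpa using row (star W) (by simpa using mem_unitaryGroup_iff'.1 hW) j

lemma trace_diagonal_mul_mul_diagonal_mul_conjTranspose (W : Matrix n n ℂ) (a b : n → ℝ) :
    (diagonal (RCLike.ofReal ∘ b) * W * diagonal (RCLike.ofReal ∘ a) * Wᴴ).trace
      = ((∑ i, b i * ∑ j, Complex.normSq (W i j) * a j : ℝ) : ℂ) := by
  simp only [trace, diag_apply, mul_apply (M := _ * diagonal _), mul_diagonal, diagonal_mul,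
    conjTranspose_apply, RCLike.star_def, Function.comp_apply, mul_sum,
    RCLike.ofReal_eq_complex_ofReal]
  push_cast
  refine sum_congr rfl fun i _ => sum_congr rfl fun j _ => ?_
  rw [← Complex.mul_conj]
  ring

lemma posSemidef_cfc {A : Matrix n n ℂ} {f : ℝ → ℝ} (hf : ∀ x, 0 ≤ f x) :
    (cfc f A).PosSemidef := by
  open scoped MatrixOrder in
  exact nonneg_iff_posSemidef.1 (cfc_nonneg fun x _ => hf x)

namespace IsHermitian

variable {A B : Matrix n n ℂ}

lemma re_trace_mul (hA : A.IsHermitian) (hB : B.IsHermitian) :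
    (A * B).trace.re = ∑ i, hB.eigenvalues i * ∑ j,
      Complex.normSq ((star (hB.eigenvectorUnitary : Matrix n n ℂ) * hA.eigenvectorUnitary) i j)
        * hA.eigenvalues j := by
  have hAB : (A * B).trace = (diagonal (RCLike.ofReal ∘ hB.eigenvalues)
      * (star (hB.eigenvectorUnitary : Matrix n n ℂ) * (hA.eigenvectorUnitary : Matrix n n ℂ))
      * diagonal (RCLike.ofReal ∘ hA.eigenvalues)
      * (star (hB.eigenvectorUnitary : Matrix n n ℂ)
          * (hA.eigenvectorUnitary : Matrix n n ℂ))ᴴ).trace := by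
    rw [trace_mul_comm]
    conv_lhs => rw [hA.spectral_theorem, hB.spectral_theorem]
    simp only [Unitary.conjStarAlgAut_apply, mul_assoc]
    rw [trace_mul_comm]
    simp only [← star_eq_conjTranspose, star_mul, star_star, mul_assoc]
  rw [hAB, trace_diagonal_mul_mul_diagonal_mul_conjTranspose, Complex.ofReal_re]

lemma exp_eq_cfc (hA : A.IsHermitian) : NormedSpace.exp A = cfc Real.exp A := by
  have h := Matrix.exp_units_conj (Unitary.toUnits hA.eigenvectorUnitary)
    (diagonal (RCLike.ofReal ∘ hA.eigenvalues))
  simp only [Unitary.val_toUnits_apply, Unitary.val_inv_toUnits_apply, UnitaryGroup.inv_val] at h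
  rw [hA.cfc_eq, IsHermitian.cfc, Unitary.conjStarAlgAut_apply]
  conv_lhs => rw [hA.spectral_theorem, Unitary.conjStarAlgAut_apply]
  rw [h, Matrix.exp_diagonal]
  congr 3
  funext i
  simp [Pi.coe_exp, ← Complex.exp_eq_exp_ℂ, Complex.ofReal_exp]

lemma trace_cfc (hA : A.IsHermitian) (f : ℝ → ℝ) :
    (cfc f A).trace = ∑ i, (f (hA.eigenvalues i) : ℂ) := by
  rw [hA.cfc_eq, IsHermitian.cfc, Unitary.conjStarAlgAut_apply, trace_mul_cycle,
    Unitary.coe_star_mul_self, one_mul, trace_diagonal]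
  rfl

lemma sum_eigenvalues_cfc (hA : A.IsHermitian) (f g : ℝ → ℝ) (hfA : (cfc f A).IsHermitian) :
    ∑ i, g (hfA.eigenvalues i) = ∑ i, g (f (hA.eigenvalues i)) := by
  have h := hfA.roots_charpoly_eq_eigenvalues
  rw [hA.charpoly_cfc_eq, Polynomial.roots_prod _ _
    (by simp [prod_ne_zero_iff, Polynomial.X_sub_C_ne_zero])] at h
  have h' : univ.val.map (fun i => f (hA.eigenvalues i)) = univ.val.map hfA.eigenvalues := by
    simpa [Multiset.map_map, Function.comp_def] using congrArg (Multiset.map Complex.re) h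
  calc ∑ i, g (hfA.eigenvalues i) = ((univ.val.map hfA.eigenvalues).map g).sum := by
        rw [Multiset.map_map]; rfl
    _ = ∑ i, g (f (hA.eigenvalues i)) := by rw [← h', Multiset.map_map]; rfl

end IsHermitian

end Matrix

section VonNeumannEntropy

variable {M : ℕ} {X Y : Matrix (Fin M) (Fin M) ℂ}

lemma vnEntropy_eq_modEntropy (hX : X.IsHermitian) :
    vnEntropy X = modEntropy hX.eigenvalues := by
  rw [vnEntropy, dif_pos hX, modEntropy, hX.trace_eq_sum_eigenvalues]
  simp

lemma vnEntropy_cfc (hY : Y.IsHermitian) (f : ℝ → ℝ) :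
    vnEntropy (cfc f Y) = modEntropy (fun i => f (hY.eigenvalues i)) := by
  have hfY : (cfc f Y).IsHermitian := cfc_predicate f Y
  have hid := hY.sum_eigenvalues_cfc f (fun x => x) hfY
  rw [vnEntropy_eq_modEntropy hfY, modEntropy, modEntropy, hid,
    hY.sum_eigenvalues_cfc f (fun x => x * log x) hfY]

lemma re_trace_mul_sub_vnEntropy_le (hY : Y.IsHermitian) (hX : X.PosSemidef)
    (hX1 : X.trace.re ≤ 1) :
    (Y * X).trace.re - vnEntropy X ≤ log (1 + ∑ i, exp (hY.eigenvalues i)) := by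
  have hW := (star hX.1.eigenvectorUnitary * hY.eigenvectorUnitary).prop
  rw [vnEntropy_eq_modEntropy hX.1, hY.re_trace_mul hX.1]
  refine sum_mul_sum_sub_modEntropy_le (normSq_mem_doublyStochastic hW) _
    hX.eigenvalues_nonneg ?_
  simpa [hX.1.trace_eq_sum_eigenvalues, Complex.re_sum] using hX1

lemma cfc_softmax_mem (hY : Y.IsHermitian) :
    cfc (softmax hY.eigenvalues) Y ∈
      {X : Matrix (Fin M) (Fin M) ℂ | X.PosSemidef ∧ X.trace.re ≤ 1} := by
  refine ⟨posSemidef_cfc (softmax_nonneg _), ?_⟩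
  rw [hY.trace_cfc, ← Complex.ofReal_sum, Complex.ofReal_re, sum_softmax]
  have : 0 ≤ (1 + ∑ i, exp (hY.eigenvalues i))⁻¹ := by positivity
  linarith

lemma re_trace_mul_cfc_softmax_sub_vnEntropy (hY : Y.IsHermitian) :
    (Y * cfc (softmax hY.eigenvalues) Y).trace.re - vnEntropy (cfc (softmax hY.eigenvalues) Y)
      = log (1 + ∑ i, exp (hY.eigenvalues i)) := by
  conv_lhs => enter [1, 1, 1, 1]; rw [← cfc_id' ℝ Y]
  rw [← cfc_mul (fun x => x) (softmax hY.eigenvalues) Y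
      (hg := (continuous_const.mul continuous_exp).continuousOn),
    hY.trace_cfc, ← Complex.ofReal_sum, Complex.ofReal_re, vnEntropy_cfc hY]
  simp_rw [mul_comm (hY.eigenvalues _)]
  exact sum_softmax_mul_sub_modEntropy hY.eigenvalues

end VonNeumannEntropy

theorem stmt13_general {M : ℕ} (Y : Matrix (Fin M) (Fin M) ℂ)
    (hY : Y.IsHermitian) :
    IsGreatest
      ((fun X : Matrix (Fin M) (Fin M) ℂ => (Y * X).trace.re - vnEntropy X) ''
        {X | X.PosSemidef ∧ X.trace.re ≤ 1})
      (Real.log (1 + (NormedSpace.exp Y).trace.re)) ∧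
    ((1 + (NormedSpace.exp Y).trace.re : ℂ)⁻¹ • NormedSpace.exp Y) ∈
      {X : Matrix (Fin M) (Fin M) ℂ | X.PosSemidef ∧ X.trace.re ≤ 1} ∧
    (Y * ((1 + (NormedSpace.exp Y).trace.re : ℂ)⁻¹ • NormedSpace.exp Y)).trace.re -
        vnEntropy ((1 + (NormedSpace.exp Y).trace.re : ℂ)⁻¹ • NormedSpace.exp Y) =
      Real.log (1 + (NormedSpace.exp Y).trace.re) := by
  have htr : (NormedSpace.exp Y).trace.re = ∑ i, exp (hY.eigenvalues i) := by
    rw [hY.exp_eq_cfc, hY.trace_cfc, ← Complex.ofReal_sum, Complex.ofReal_re]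
  have hG : (1 + (NormedSpace.exp Y).trace.re : ℂ)⁻¹ • NormedSpace.exp Y
      = cfc (softmax hY.eigenvalues) Y := by
    unfold softmax
    rw [cfc_const_mul _ Real.exp Y, ← hY.exp_eq_cfc, htr,
      RCLike.real_smul_eq_coe_smul (K := ℂ)]
    norm_cast
  rw [hG, htr]
  have hval := re_trace_mul_cfc_softmax_sub_vnEntropy hY
  refine ⟨⟨⟨_, cfc_softmax_mem hY, hval⟩, ?_⟩, cfc_softmax_mem hY, hval⟩
  rintro _ ⟨X, ⟨hX, hX1⟩, rfl⟩
  exact re_trace_mul_sub_vnEntropy_le hY hX hX1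

theorem stmt13 {M : ℕ} (hM : 1 ≤ M) (Y : Matrix (Fin M) (Fin M) ℂ)
    (hY : Y.IsHermitian) :
    IsGreatest
      ((fun X : Matrix (Fin M) (Fin M) ℂ => (Y * X).trace.re - vnEntropy X) ''
        {X | X.PosSemidef ∧ X.trace.re ≤ 1})
      (Real.log (1 + (NormedSpace.exp Y).trace.re)) ∧
    ((1 + (NormedSpace.exp Y).trace.re : ℂ)⁻¹ • NormedSpace.exp Y) ∈
      {X : Matrix (Fin M) (Fin M) ℂ | X.PosSemidef ∧ X.trace.re ≤ 1} ∧
    (Y * ((1 + (NormedSpace.exp Y).trace.re : ℂ)⁻¹ • NormedSpace.exp Y)).trace.re -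
        vnEntropy ((1 + (NormedSpace.exp Y).trace.re : ℂ)⁻¹ • NormedSpace.exp Y) =
      Real.log (1 + (NormedSpace.exp Y).trace.re) :=
  stmt13_general Y hY
end

section
/- Let X* and X be positive semidefinite Hermitian M×M matrices with tr(X*) ≤ 1, tr(X) ≤ 1, and X positive definite with tr(X) < 1. Define d_KL(X*, X) = tr(X*(log X* − log X)) + (1 − tr X*) log((1 − tr X*)/(1 − tr X)). Then d_KL(X*, X) ≥ ¼ ‖X* − X‖₁², where ‖·‖₁ denotes the trace (nuclear) norm. -/
open scoped Matrix ComplexOrder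

/-- Matrix logarithm of a Hermitian matrix via the spectral decomposition
(junk value `0` for non-Hermitian matrices). -/
noncomputable def matLog {M : ℕ} (X : Matrix (Fin M) (Fin M) ℂ) :
    Matrix (Fin M) (Fin M) ℂ :=
  if h : X.IsHermitian then
    (h.eigenvectorUnitary : Matrix (Fin M) (Fin M) ℂ) *
      Matrix.diagonal (fun i => (Real.log (h.eigenvalues i) : ℂ)) *
      star (h.eigenvectorUnitary : Matrix (Fin M) (Fin M) ℂ)
  else 0

/-- Trace (nuclear) norm of a Hermitian matrix: the sum of the absolute values of
its eigenvalues (junk value `0` for non-Hermitian matrices). -/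
noncomputable def traceNorm {M : ℕ} (X : Matrix (Fin M) (Fin M) ℂ) : ℝ :=
  if h : X.IsHermitian then ∑ i, |h.eigenvalues i| else 0

/-!
Diagonalize `X* = U diag(λ) U*` and `X = V diag(μ) V*` and put `W = U* V`. The squared moduli
`c i j = |W i j|²` form a doubly stochastic matrix, which turns the divergence into the sum of the
scalar Bregman terms `c i j (λ i log λ i - λ i log μ j - λ i + μ j)` and
`s log (s / t) - s + t` with `s = 1 - tr X*`, `t = 1 - tr X`. Each of the former is at least
`c i j (λ i - μ j)² / (2 (λ i + μ j))`, the latter is nonnegative.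

On the other side `‖X* - X‖₁ = tr (E (X* - X))` for the unitary `E = sign (X* - X)`, and
expanding in the two eigenbases gives `∑ (λ i - μ j) G i j conj (W i j)` with `G = U* E V`
unitary. Cauchy–Schwarz with the weights `|G i j|² (λ i + μ j)`, whose total is
`tr X* + tr X ≤ 2`, bounds its square by four times the sum above.
-/

namespace Real

lemma two_mul_sub_div_add_le_log_div {x y : ℝ} (hy : 0 < y) (hyx : y ≤ x) :
    2 * (x - y) / (x + y) ≤ log (x / y) := by
  have hsum := hasSum_log_one_add (a := x / y - 1) (by rw [sub_nonneg, one_le_div hy]; exact hyx)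
  have hratio : (x / y - 1) / (x / y - 1 + 2) = (x - y) / (x + y) := by
    field_simp; ring
  rw [hratio, add_sub_cancel] at hsum
  have hq : 0 ≤ (x - y) / (x + y) := div_nonneg (by linarith) (by linarith)
  calc 2 * (x - y) / (x + y)
      = 2 * (1 / (2 * ((0 : ℕ) : ℝ) + 1)) * ((x - y) / (x + y)) ^ (2 * 0 + 1) := by norm_num; ring
    _ ≤ log (x / y) := le_hasSum hsum 0 fun k _ => by positivity

lemma sq_sub_sq_div_le_log_div {x y : ℝ} (hx : 0 < x) (hxy : x ≤ y) :
    (x ^ 2 - y ^ 2) / (2 * x * y) ≤ log (x / y) := by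
  have hy := hx.trans_le hxy
  have hu : 0 ≤ -log (x / y) :=
    neg_nonneg.2 (log_nonpos (by positivity) ((div_le_one hy).2 hxy))
  have hsinh : sinh (-log (x / y)) = (y / x - x / y) / 2 := by
    rw [sinh_eq, neg_neg, exp_log (by positivity), exp_neg, exp_log (by positivity), inv_div]
  have := self_le_sinh_iff.2 hu
  rw [hsinh] at this
  calc (x ^ 2 - y ^ 2) / (2 * x * y) = -((y / x - x / y) / 2) := by field_simp; ring
    _ ≤ log (x / y) := by linarith

lemma sq_sub_div_le_mul_log_sub_add {x y : ℝ} (hx : 0 ≤ x) (hy : 0 < y) :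
    (x - y) ^ 2 / (2 * (x + y)) ≤ x * log x - x * log y - x + y := by
  rcases hx.eq_or_lt with rfl | hx
  · rw [div_le_iff₀ (by positivity)]
    nlinarith
  rw [← mul_sub, ← log_div hx.ne' hy.ne']
  rcases le_total x y with hxy | hyx
  · calc (x - y) ^ 2 / (2 * (x + y)) ≤ (x - y) ^ 2 / (2 * y) := by gcongr; linarith
      _ = x * ((x ^ 2 - y ^ 2) / (2 * x * y)) - x + y := by field_simp; ring
      _ ≤ x * log (x / y) - x + y := by gcongr; exact sq_sub_sq_div_le_log_div hx hxy
  · calc (x - y) ^ 2 / (2 * (x + y)) ≤ (x - y) ^ 2 / (x + y) := by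
          gcongr; linarith
      _ = x * (2 * (x - y) / (x + y)) - x + y := by field_simp; ring
      _ ≤ x * log (x / y) - x + y := by gcongr; exact two_mul_sub_div_add_le_log_div hy hyx

end Real

section DoublyStochastic

open Finset Real

variable {ι : Type*} [Fintype ι] [DecidableEq ι]

lemma sum_sum_mul_add_of_mem_doublyStochastic {M : Matrix ι ι ℝ}
    (hM : M ∈ doublyStochastic ℝ ι) (a b : ι → ℝ) :
    ∑ i, ∑ j, M i j * (a i + b j) = ∑ i, a i + ∑ j, b j := by
  simp only [mul_add, sum_add_distrib]
  rw [sum_comm (f := fun i j => M i j * b j)]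
  simp only [← sum_mul, sum_row_of_mem_doublyStochastic hM,
    sum_col_of_mem_doublyStochastic hM, one_mul]

lemma sq_sum_abs_sub_mul_le {lam mu : ι → ℝ} {g c : Matrix ι ι ℝ} {r : ι → ι → ℝ}
    (hlam : ∀ i, 0 ≤ lam i) (hmu : ∀ j, 0 < mu j) (hlam1 : ∑ i, lam i ≤ 1)
    (hmu1 : ∑ j, mu j ≤ 1) (hg : g ∈ doublyStochastic ℝ ι) (hc : ∀ i j, 0 ≤ c i j)
    (hr : ∀ i j, r i j ^ 2 ≤ g i j * c i j) :
    (∑ i, ∑ j, |lam i - mu j| * r i j) ^ 2 ≤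
      4 * ∑ i, ∑ j, c i j * ((lam i - mu j) ^ 2 / (2 * (lam i + mu j))) := by
  have hpos : ∀ i j, 0 < lam i + mu j := fun i j => add_pos_of_nonneg_of_pos (hlam i) (hmu j)
  have hterm : ∀ i j, 0 ≤ c i j * ((lam i - mu j) ^ 2 / (2 * (lam i + mu j))) := fun i j => by
    have := hpos i j; have := hc i j; positivity
  have hcs := sum_sq_le_sum_mul_sum_of_sq_le_mul (univ : Finset (ι × ι))
    (r := fun p => |lam p.1 - mu p.2| * r p.1 p.2)
    (f := fun p => 2 * (g p.1 p.2 * (lam p.1 + mu p.2)))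
    (g := fun p => c p.1 p.2 * ((lam p.1 - mu p.2) ^ 2 / (2 * (lam p.1 + mu p.2))))
    (fun p _ => by
      have := nonneg_of_mem_doublyStochastic hg (i := p.1) (j := p.2)
      have := hpos p.1 p.2
      positivity)
    (fun p _ => hterm p.1 p.2)
    (fun p _ => by
      calc (|lam p.1 - mu p.2| * r p.1 p.2) ^ 2 = (lam p.1 - mu p.2) ^ 2 * r p.1 p.2 ^ 2 := by
            rw [mul_pow, sq_abs]
        _ ≤ (lam p.1 - mu p.2) ^ 2 * (g p.1 p.2 * c p.1 p.2) := by gcongr; exact hr _ _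
        _ = _ := by field_simp [(hpos p.1 p.2).ne'])
  simp only [Fintype.sum_prod_type, ← mul_sum] at hcs
  have hweight : 2 * ∑ i, ∑ j, g i j * (lam i + mu j) ≤ 4 := by
    rw [sum_sum_mul_add_of_mem_doublyStochastic hg]; linarith
  exact hcs.trans (mul_le_mul_of_nonneg_right hweight
    (sum_nonneg fun i _ => sum_nonneg fun j _ => hterm i j))

lemma quarter_sq_sum_abs_sub_mul_le {lam mu : ι → ℝ} {g c : Matrix ι ι ℝ}
    {r : ι → ι → ℝ} (hlam : ∀ i, 0 ≤ lam i) (hmu : ∀ j, 0 < mu j) (hlam1 : ∑ i, lam i ≤ 1)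
    (hmu1 : ∑ j, mu j < 1) (hg : g ∈ doublyStochastic ℝ ι) (hc : c ∈ doublyStochastic ℝ ι)
    (hr : ∀ i j, r i j ^ 2 ≤ g i j * c i j) :
    1 / 4 * (∑ i, ∑ j, |lam i - mu j| * r i j) ^ 2 ≤
      ∑ i, lam i * log (lam i) - ∑ i, ∑ j, c i j * (lam i * log (mu j)) +
        (1 - ∑ i, lam i) * log ((1 - ∑ i, lam i) / (1 - ∑ j, mu j)) := by
  set lh := 1 - ∑ i, lam i
  set mh := 1 - ∑ j, mu j
  have hlh : 0 ≤ lh := by linarith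
  have hmh : 0 < mh := by linarith
  have hrest : 0 ≤ lh * log (lh / mh) - lh + mh := by
    have := sq_sub_div_le_mul_log_sub_add hlh hmh
    rcases hlh.eq_or_lt with h | h
    · rw [← h]; simpa using hmh.le
    · rw [log_div h.ne' hmh.ne', mul_sub]
      exact (div_nonneg (sq_nonneg _) (by positivity)).trans this
  calc 1 / 4 * (∑ i, ∑ j, |lam i - mu j| * r i j) ^ 2
      ≤ ∑ i, ∑ j, c i j * ((lam i - mu j) ^ 2 / (2 * (lam i + mu j))) := by
        linarith [sq_sum_abs_sub_mul_le hlam hmu hlam1 hmu1.le hg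
          (fun _ _ => nonneg_of_mem_doublyStochastic hc) hr]
    _ ≤ ∑ i, ∑ j, c i j *
          ((lam i * log (lam i) - lam i) + mu j - lam i * log (mu j)) := by
        gcongr with i _ j _
        · exact nonneg_of_mem_doublyStochastic hc
        · linarith [sq_sub_div_le_mul_log_sub_add (hlam i) (hmu j)]
    _ = ∑ i, lam i * log (lam i) - ∑ i, ∑ j, c i j * (lam i * log (mu j)) + (lh - mh) := by
        simp only [mul_sub, sum_sub_distrib, sum_sum_mul_add_of_mem_doublyStochastic hc]
        simp only [lh, mh]
        ring
    _ ≤ _ := by linarith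

end DoublyStochastic

namespace Matrix

open Finset

variable {n 𝕜 : Type*} [Fintype n] [DecidableEq n] [RCLike 𝕜]

lemma trace_mul_conj_diagonal {R : Type*} [CommSemiring R] [Star R] (E U : Matrix n n R)
    (d : n → R) : (E * (U * diagonal d * star U)).trace = ∑ i, d i * (star U * E * U) i i := by
  rw [← mul_assoc, ← mul_assoc, trace_mul_comm, ← mul_assoc, ← mul_assoc]
  simp only [trace, diag, mul_diagonal, mul_comm]

lemma trace_conj_diagonal_mul_conj_diagonal (U V : Matrix n n 𝕜) (a b : n → 𝕜) :
    (U * diagonal a * star U * (V * diagonal b * star V)).trace =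
      ∑ i, ∑ j, (‖(star U * V) i j‖ ^ 2 : 𝕜) * (a i * b j) := by
  set W := star U * V
  have hconj : star V * (U * diagonal a * star U) * V = star W * diagonal a * W := by
    simp only [W, star_mul, star_star, mul_assoc]
  rw [trace_mul_conj_diagonal, hconj, sum_comm]
  refine sum_congr rfl fun j _ => ?_
  rw [mul_apply, mul_sum]
  simp only [mul_diagonal, star_apply]
  refine sum_congr rfl fun i _ => ?_
  rw [← RCLike.conj_mul, RCLike.star_def]
  ring

lemma trace_mul_sub_conj_diagonal {E U V : Matrix n n 𝕜} (hU : U ∈ unitaryGroup n 𝕜)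
    (hV : V ∈ unitaryGroup n 𝕜) (a b : n → 𝕜) :
    (E * (U * diagonal a * star U - V * diagonal b * star V)).trace =
      ∑ i, ∑ j, (a i - b j) * ((star U * E * V) i j * star ((star U * V) i j)) := by
  set G := star U * E * V
  set W := star U * V
  have hU' : star U * E * U = G * star W := by
    simp only [G, W, star_mul, star_star, mul_assoc]
    rw [← mul_assoc V, Unitary.mul_star_self_of_mem hV, one_mul]
  have hV' : star V * E * V = star W * G := by
    simp only [G, W, star_mul, star_star, ← mul_assoc]
    rw [mul_assoc (star V) U, Unitary.mul_star_self_of_mem hU, mul_one]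
  rw [mul_sub, trace_sub, trace_mul_conj_diagonal, trace_mul_conj_diagonal, hU', hV',
    sum_comm (f := fun i j => (a i - b j) * _)]
  simp only [mul_apply, star_apply, mul_sum, sub_mul, sum_sub_distrib]
  rw [sum_comm]
  congr 1
  simp only [mul_comm (star _)]

lemma map_norm_sq_mem_doublyStochastic {U : Matrix n n 𝕜} (hU : U ∈ unitaryGroup n 𝕜) :
    U.map (fun z => ‖z‖ ^ 2) ∈ doublyStochastic ℝ n := by
  have hrow (i : n) : ∑ j, ‖U i j‖ ^ 2 = 1 := by
    have h : (U * star U) i i = (1 : Matrix n n 𝕜) i i := by rw [Unitary.mul_star_self_of_mem hU]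
    simp only [mul_apply, star_apply, RCLike.star_def, RCLike.mul_conj, one_apply_eq] at h
    exact_mod_cast h
  have hcol (j : n) : ∑ i, ‖U i j‖ ^ 2 = 1 := by
    have h : (star U * U) j j = (1 : Matrix n n 𝕜) j j := by rw [Unitary.star_mul_self_of_mem hU]
    simp only [mul_apply, star_apply, RCLike.star_def, mul_comm (starRingEnd 𝕜 _),
      RCLike.mul_conj, one_apply_eq] at h
    exact_mod_cast h
  exact mem_doublyStochastic_iff_sum.2 ⟨fun _ _ => sq_nonneg _, hrow, hcol⟩

namespace IsHermitian

variable {A : Matrix n n 𝕜} (hA : A.IsHermitian)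

lemma eq_conj_diagonal_eigenvalues : A = (hA.eigenvectorUnitary : Matrix n n 𝕜) *
    diagonal (RCLike.ofReal ∘ hA.eigenvalues) * star (hA.eigenvectorUnitary : Matrix n n 𝕜) := by
  simpa using hA.spectral_theorem

lemma star_eigenvectorUnitary_mul_mul : star (hA.eigenvectorUnitary : Matrix n n 𝕜) * A *
    (hA.eigenvectorUnitary : Matrix n n 𝕜) = diagonal (RCLike.ofReal ∘ hA.eigenvalues) := by
  simpa using hA.conjStarAlgAut_star_eigenvectorUnitary

lemma exists_unitary_trace_mul_eq_sum_abs_eigenvalues :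
    ∃ E ∈ unitaryGroup n 𝕜, (E * A).trace = ∑ i, ((|hA.eigenvalues i| : ℝ) : 𝕜) := by
  set U := (hA.eigenvectorUnitary : Matrix n n 𝕜)
  set s : n → 𝕜 := fun i => if 0 ≤ hA.eigenvalues i then 1 else -1
  have hs : diagonal s ∈ unitaryGroup n 𝕜 := by
    rw [mem_unitaryGroup_iff, star_eq_conjTranspose, diagonal_conjTranspose,
      diagonal_mul_diagonal, ← diagonal_one]
    congr 1; funext i
    by_cases h : 0 ≤ hA.eigenvalues i <;> simp [s, h]
  refine ⟨U * diagonal s * star U,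
    mul_mem (mul_mem hA.eigenvectorUnitary.2 hs) (Unitary.star_mem hA.eigenvectorUnitary.2), ?_⟩
  rw [trace_mul_comm, trace_mul_conj_diagonal, hA.star_eigenvectorUnitary_mul_mul]
  refine sum_congr rfl fun i _ => ?_
  by_cases h : 0 ≤ hA.eigenvalues i
  · simp [s, h, abs_of_nonneg h]
  · simp [s, h, abs_of_neg (not_le.1 h)]

end IsHermitian

end Matrix

section SpectralData

open Matrix Finset Real

variable {M : ℕ} {A B : Matrix (Fin M) (Fin M) ℂ}

lemma traceNorm_nonneg (X : Matrix (Fin M) (Fin M) ℂ) : 0 ≤ traceNorm X := by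
  unfold traceNorm
  split_ifs <;> positivity

lemma exists_unitary_traceNorm_sub_le (hA : A.IsHermitian) (hB : B.IsHermitian) :
    ∃ G ∈ unitaryGroup (Fin M) ℂ, traceNorm (A - B) ≤
      ∑ i, ∑ j, |hA.eigenvalues i - hB.eigenvalues j| * (‖G i j‖ *
        ‖(star (hA.eigenvectorUnitary : Matrix (Fin M) (Fin M) ℂ) *
          hB.eigenvectorUnitary) i j‖) := by
  obtain ⟨E, hE, htr⟩ := (hA.sub hB).exists_unitary_trace_mul_eq_sum_abs_eigenvalues
  refine ⟨star (hA.eigenvectorUnitary : Matrix (Fin M) (Fin M) ℂ) * E * hB.eigenvectorUnitary,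
    mul_mem (mul_mem (Unitary.star_mem hA.eigenvectorUnitary.2) hE) hB.eigenvectorUnitary.2, ?_⟩
  have hexp := trace_mul_sub_conj_diagonal (E := E) hA.eigenvectorUnitary.2
    hB.eigenvectorUnitary.2 (RCLike.ofReal ∘ hA.eigenvalues) (RCLike.ofReal ∘ hB.eigenvalues)
  rw [← hA.eq_conj_diagonal_eigenvalues, ← hB.eq_conj_diagonal_eigenvalues] at hexp
  calc traceNorm (A - B) = ‖(E * (A - B)).trace‖ := by
        rw [htr, traceNorm, dif_pos (hA.sub hB)]
        norm_cast
        exact (Real.norm_of_nonneg (sum_nonneg fun i _ => abs_nonneg _)).symm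
    _ ≤ _ := by
        rw [hexp]
        refine (norm_sum_le _ _).trans (sum_le_sum fun i _ => (norm_sum_le _ _).trans_eq ?_)
        simp only [Function.comp_apply, norm_mul, norm_star, ← RCLike.ofReal_sub,
          RCLike.norm_ofReal]

lemma matLog_of_isHermitian (hA : A.IsHermitian) :
    matLog A = (hA.eigenvectorUnitary : Matrix (Fin M) (Fin M) ℂ) *
      diagonal (fun i => (Real.log (hA.eigenvalues i) : ℂ)) *
      star (hA.eigenvectorUnitary : Matrix (Fin M) (Fin M) ℂ) :=
  dif_pos hA

lemma re_trace_mul_matLog_sub_matLog (hA : A.IsHermitian) (hB : B.IsHermitian) :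
    (A * (matLog A - matLog B)).trace.re =
      ∑ i, hA.eigenvalues i * log (hA.eigenvalues i) - ∑ i, ∑ j,
        ‖(star (hA.eigenvectorUnitary : Matrix (Fin M) (Fin M) ℂ) *
          hB.eigenvectorUnitary) i j‖ ^ 2 *
          (hA.eigenvalues i * log (hB.eigenvalues j)) := by
  have hAA := trace_mul_conj_diagonal A hA.eigenvectorUnitary
    (fun i => (Real.log (hA.eigenvalues i) : ℂ))
  rw [← matLog_of_isHermitian hA, hA.star_eigenvectorUnitary_mul_mul] at hAA
  have hAB := trace_conj_diagonal_mul_conj_diagonal hA.eigenvectorUnitary hB.eigenvectorUnitary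
    (RCLike.ofReal ∘ hA.eigenvalues) (fun j => (Real.log (hB.eigenvalues j) : ℂ))
  rw [← hA.eq_conj_diagonal_eigenvalues, ← matLog_of_isHermitian hB] at hAB
  rw [mul_sub, trace_sub, Complex.sub_re, hAA, hAB]
  simp only [diagonal_apply_eq, Function.comp_apply]
  simp [mul_comm, ← Complex.ofReal_pow]

end SpectralData

theorem stmt14 {M : ℕ} (Xs X : Matrix (Fin M) (Fin M) ℂ)
    (hXs : Xs.PosSemidef) (hXsTr : Xs.trace.re ≤ 1)
    (hX : X.PosDef) (hXTr : X.trace.re < 1) :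
    (1 / 4) * (traceNorm (Xs - X)) ^ 2 ≤
      (Xs * (matLog Xs - matLog X)).trace.re +
        (1 - Xs.trace.re) * Real.log ((1 - Xs.trace.re) / (1 - X.trace.re)) := by
  obtain ⟨G, hG, hnorm⟩ := exists_unitary_traceNorm_sub_le hXs.1 hX.1
  have hW := mul_mem (Unitary.star_mem hXs.1.eigenvectorUnitary.2) hX.1.eigenvectorUnitary.2
  have htrXs : Xs.trace.re = ∑ i, hXs.1.eigenvalues i := by
    simp [hXs.1.trace_eq_sum_eigenvalues]
  have htrX : X.trace.re = ∑ j, hX.1.eigenvalues j := by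
    simp [hX.1.trace_eq_sum_eigenvalues]
  rw [re_trace_mul_matLog_sub_matLog hXs.1 hX.1, htrXs, htrX]
  rw [htrXs] at hXsTr
  rw [htrX] at hXTr
  exact (mul_le_mul_of_nonneg_left (pow_le_pow_left₀ (traceNorm_nonneg _) hnorm 2)
    (by norm_num)).trans (quarter_sq_sum_abs_sub_mul_le hXs.eigenvalues_nonneg
      hX.eigenvalues_pos hXsTr hXTr (Matrix.map_norm_sq_mem_doublyStochastic hG)
      (Matrix.map_norm_sq_mem_doublyStochastic hW) fun i j => by simp [mul_pow])
end
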